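/- arXiv:1609.03821 — 3 statements merged into one kernel-verified Lean document; each statement's English description precedes it below -/
import Mathlib

section
/- For every β ∈ (0,1) there exists a constant C > 0 such that for all x ∈ [0,1] and all y ∈ (0,1] one has (((x² + y²)^β − x^{2β})² / y²) · (x² + y²)^{1−β} ≤ C; that is, the function F(x,y) = ((x²+y²)^β − x^{2β})² · y^{−2} · (x²+y²)^{1−β} is bounded on [0,1] × (0,1]. -/
/-!
Write `t = x²`, `s = y²`, `r = t + s`. For `t ≤ r` and `β ≤ 1` one has
`t ^ β = t · t ^ (β - 1) ≥ t · r ^ (β - 1)`, so the increment `r ^ β - t ^ β` is at most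
`s · r ^ (β - 1)`. Substituting, the whole expression is at most `s · r ^ (β - 1) ≤ r ^ β ≤ 2`.
-/

namespace Real

lemma mul_rpow_sub_one_le_rpow {t r β : ℝ} (ht : 0 ≤ t) (htr : t ≤ r) (hβ : β ≤ 1) :
    t * r ^ (β - 1) ≤ t ^ β := by
  rcases ht.eq_or_lt with rfl | ht
  · simpa using rpow_nonneg le_rfl β
  calc t * r ^ (β - 1) ≤ t * t ^ (β - 1) :=
        mul_le_mul_of_nonneg_left (rpow_le_rpow_of_nonpos ht htr (by linarith)) ht.le
    _ = t ^ β := by rw [rpow_sub_one ht.ne', mul_div_cancel₀ _ ht.ne']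

lemma rpow_sub_rpow_le_sub_mul {t r β : ℝ} (ht : 0 ≤ t) (htr : t ≤ r) (hβ : β ≤ 1) :
    r ^ β - t ^ β ≤ (r - t) * r ^ (β - 1) := by
  rcases (ht.trans htr).eq_or_lt with rfl | hr
  · obtain rfl : t = 0 := le_antisymm htr ht
    simp
  have hrβ : r * r ^ (β - 1) = r ^ β := by rw [rpow_sub_one hr.ne', mul_div_cancel₀ _ hr.ne']
  linarith [mul_rpow_sub_one_le_rpow ht htr hβ]

lemma rpow_add_sub_rpow_sq_div_mul_le {t s β : ℝ} (ht : 0 ≤ t) (hs : 0 < s) (hβ0 : 0 ≤ β)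
    (hβ1 : β ≤ 1) :
    ((t + s) ^ β - t ^ β) ^ 2 / s * (t + s) ^ (1 - β) ≤ (t + s) ^ β := by
  set r := t + s with hr_def
  have hr : 0 < r := by positivity
  have hD0 : 0 ≤ r ^ β - t ^ β := sub_nonneg.2 (rpow_le_rpow ht (by linarith) hβ0)
  have hD : r ^ β - t ^ β ≤ s * r ^ (β - 1) := by
    simpa [hr_def] using rpow_sub_rpow_le_sub_mul ht (by linarith : t ≤ r) hβ1
  calc (r ^ β - t ^ β) ^ 2 / s * r ^ (1 - β)
      ≤ (s * r ^ (β - 1)) ^ 2 / s * r ^ (1 - β) := by gcongr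
    _ = s * (r ^ (β - 1) * (r ^ (β - 1) * r ^ (1 - β))) := by field_simp
    _ = s * r ^ (β - 1) := by rw [← rpow_add hr]; simp
    _ ≤ r * r ^ (β - 1) := by gcongr; linarith
    _ = r ^ β := by rw [rpow_sub_one hr.ne', mul_div_cancel₀ _ hr.ne']

end Real

/-- For every `β ∈ (0,1)` there is `C > 0` such that
`(((x² + y²)^β − x^{2β})² / y²) · (x² + y²)^{1−β} ≤ C`
for all `x ∈ [0,1]`, `y ∈ (0,1]` (real powers via `Real.rpow`). -/
theorem stmt0 (β : ℝ) (hβ0 : 0 < β) (hβ1 : β < 1) :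
    ∃ C : ℝ, 0 < C ∧ ∀ x y : ℝ, x ∈ Set.Icc (0:ℝ) 1 → y ∈ Set.Ioc (0:ℝ) 1 →
      (((x ^ 2 + y ^ 2) ^ β - x ^ (2 * β)) ^ 2 / y ^ 2) *
        (x ^ 2 + y ^ 2) ^ (1 - β) ≤ C := by
  refine ⟨2, two_pos, fun x y ⟨hx0, hx1⟩ ⟨hy0, hy1⟩ => ?_⟩
  have hx : x ^ (2 * β) = (x ^ 2) ^ β := by exact_mod_cast Real.rpow_natCast_mul hx0 2 β
  have hsum : x ^ 2 + y ^ 2 ≤ 2 := by nlinarith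
  calc (((x ^ 2 + y ^ 2) ^ β - x ^ (2 * β)) ^ 2 / y ^ 2) * (x ^ 2 + y ^ 2) ^ (1 - β)
      ≤ (x ^ 2 + y ^ 2) ^ β :=
        hx ▸ Real.rpow_add_sub_rpow_sq_div_mul_le (sq_nonneg x) (by positivity) hβ0.le hβ1.le
    _ ≤ 2 ^ β := by gcongr
    _ ≤ 2 ^ (1 : ℝ) := Real.rpow_le_rpow_of_exponent_le one_le_two hβ1.le
    _ = 2 := Real.rpow_one 2
end

section
/- For every ρ ∈ (0,1) there exists a constant C > 0 such that for all real numbers a ≥ 0 and b > 0 one has ((a² + b²)^ρ − a^{2ρ})² ≤ C · b² · (a² + b²)^{2ρ−1}. -/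
/-! Take `C = 1`, `x = a²`, `s = a² + b²`. As `t ↦ t ^ (ρ - 1)` is antitone, `x · s ^ (ρ - 1) ≤ x ^ ρ`,
i.e. `s ^ ρ - x ^ ρ ≤ (s - x) · s ^ (ρ - 1)`; multiplying by `s ^ ρ - x ^ ρ ≤ s ^ ρ` gives the bound. -/

namespace Real

theorem mul_rpow_sub_one_le_rpow_s1 {x s ρ : ℝ} (hx : 0 ≤ x) (hxs : x ≤ s) (hρ : ρ ≤ 1) :
    x * s ^ (ρ - 1) ≤ x ^ ρ := by
  rcases hx.eq_or_lt with rfl | hx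
  · simpa using rpow_nonneg le_rfl ρ
  calc x * s ^ (ρ - 1) ≤ x * x ^ (ρ - 1) :=
        mul_le_mul_of_nonneg_left (rpow_le_rpow_of_nonpos hx hxs (by linarith)) hx.le
    _ = x ^ ρ := by rw [mul_comm, ← rpow_add_one hx.ne', sub_add_cancel]

theorem rpow_sub_rpow_le_mul_rpow_sub_one {x s ρ : ℝ} (hx : 0 ≤ x) (hxs : x ≤ s) (hs : 0 < s)
    (hρ : ρ ≤ 1) : s ^ ρ - x ^ ρ ≤ (s - x) * s ^ (ρ - 1) := by
  have hsρ : s ^ ρ = s * s ^ (ρ - 1) := by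
    rw [mul_comm, ← rpow_add_one hs.ne', sub_add_cancel]
  linarith [mul_rpow_sub_one_le_rpow_s1 hx hxs hρ]

theorem sq_rpow_sub_rpow_le {x s ρ : ℝ} (hx : 0 ≤ x) (hxs : x ≤ s) (hs : 0 < s)
    (hρ0 : 0 ≤ ρ) (hρ1 : ρ ≤ 1) : (s ^ ρ - x ^ ρ) ^ 2 ≤ (s - x) * s ^ (2 * ρ - 1) := by
  have hdiff := rpow_sub_rpow_le_mul_rpow_sub_one hx hxs hs hρ1
  have hnonneg : 0 ≤ s ^ ρ - x ^ ρ := sub_nonneg.2 (rpow_le_rpow hx hxs hρ0)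
  calc (s ^ ρ - x ^ ρ) ^ 2 = (s ^ ρ - x ^ ρ) * (s ^ ρ - x ^ ρ) := sq _
    _ ≤ ((s - x) * s ^ (ρ - 1)) * s ^ ρ :=
        mul_le_mul hdiff (sub_le_self _ (rpow_nonneg hx ρ)) hnonneg
          (mul_nonneg (sub_nonneg.2 hxs) (rpow_nonneg hs.le _))
    _ = (s - x) * s ^ (2 * ρ - 1) := by
        rw [mul_assoc, ← rpow_add hs]; ring_nf

end Real

/-- For every `ρ ∈ (0,1)` there is `C > 0` such that
`((a² + b²)^ρ − a^{2ρ})² ≤ C · b² · (a² + b²)^{2ρ−1}` for all `a ≥ 0`, `b > 0`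
(real powers via `Real.rpow`). -/
theorem stmt1 (ρ : ℝ) (hρ0 : 0 < ρ) (hρ1 : ρ < 1) :
    ∃ C : ℝ, 0 < C ∧ ∀ a b : ℝ, 0 ≤ a → 0 < b →
      ((a ^ 2 + b ^ 2) ^ ρ - a ^ (2 * ρ)) ^ 2 ≤
        C * b ^ 2 * (a ^ 2 + b ^ 2) ^ (2 * ρ - 1) := by
  refine ⟨1, one_pos, fun a b ha hb => ?_⟩
  have hpow : a ^ (2 * ρ) = (a ^ 2) ^ ρ := by
    rw [Real.rpow_mul ha, Real.rpow_two]
  rw [hpow, one_mul]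
  simpa using Real.sq_rpow_sub_rpow_le (sq_nonneg a) (le_add_of_nonneg_right (sq_nonneg b))
    (by positivity) hρ0.le hρ1.le
end

section
/- For every β ∈ (0,1), every ε ≥ 0 and every t ∈ [0,1], the function r ↦ ((ε² + r)^β − ε^{2β})/r is nonnegative on (0, t], is integrable on (0, t], and satisfies 0 ≤ (1/β) ∫₀^t ((ε² + r)^β − ε^{2β})/r dr ≤ t^β/β² ≤ 1/β². In particular the bound is uniform in ε. -/
/-!
Since `x ↦ x ^ β` is subadditive for `0 ≤ β ≤ 1`, `(ε² + r) ^ β - (ε²) ^ β ≤ r ^ β`, so the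
integrand is dominated by `r ^ (β - 1)` uniformly in `ε`, and `∫₀^t r ^ (β - 1) dr = t ^ β / β`.
-/

open MeasureTheory Set

namespace Real

lemma rpow_add_sub_rpow_div_nonneg {a r β : ℝ} (ha : 0 ≤ a) (hr : 0 < r) (hβ : 0 ≤ β) :
    0 ≤ ((a + r) ^ β - a ^ β) / r :=
  div_nonneg (sub_nonneg.2 (rpow_le_rpow ha (by linarith) hβ)) hr.le

lemma rpow_add_sub_rpow_div_le {a r β : ℝ} (ha : 0 ≤ a) (hr : 0 < r) (hβ0 : 0 ≤ β)
    (hβ1 : β ≤ 1) : ((a + r) ^ β - a ^ β) / r ≤ r ^ (β - 1) := by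
  have hsub : (a + r) ^ β - a ^ β ≤ r ^ β := by
    linarith [rpow_add_le_add_rpow ha hr.le hβ0 hβ1]
  calc ((a + r) ^ β - a ^ β) / r ≤ r ^ β / r := by gcongr
    _ = r ^ (β - 1) := by rw [rpow_sub hr, rpow_one]

lemma integrableOn_Ioc_rpow {s : ℝ} (hs : -1 < s) (t : ℝ) :
    IntegrableOn (fun r : ℝ => r ^ s) (Ioc 0 t) := by
  rcases le_or_gt t 0 with ht | ht
  · rw [Ioc_eq_empty ht.not_gt]
    exact integrableOn_empty
  · exact (intervalIntegral.intervalIntegrable_rpow' hs (a := 0) (b := t)).1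

lemma integral_Ioc_rpow_sub_one {β t : ℝ} (hβ : 0 < β) (ht : 0 ≤ t) :
    ∫ r in Ioc 0 t, r ^ (β - 1) = t ^ β / β := by
  rw [← intervalIntegral.integral_of_le ht, integral_rpow (Or.inl (by linarith))]
  simp [zero_rpow hβ.ne']

lemma integrableOn_rpow_add_sub_rpow_div {a β : ℝ} (ha : 0 ≤ a) (hβ0 : 0 < β) (hβ1 : β ≤ 1)
    (t : ℝ) : IntegrableOn (fun r : ℝ => ((a + r) ^ β - a ^ β) / r) (Ioc 0 t) := by
  have hmeas : Measurable fun r : ℝ => ((a + r) ^ β - a ^ β) / r :=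
    (((measurable_const.add measurable_id).pow_const β).sub measurable_const).div measurable_id
  refine (integrableOn_Ioc_rpow (s := β - 1) (by linarith) t).mono' hmeas.aestronglyMeasurable ?_
  filter_upwards [ae_restrict_mem measurableSet_Ioc] with r hr
  rw [norm_of_nonneg (rpow_add_sub_rpow_div_nonneg ha hr.1 hβ0.le)]
  exact rpow_add_sub_rpow_div_le ha hr.1 hβ0.le hβ1

lemma integral_rpow_add_sub_rpow_div_le {a β t : ℝ} (ha : 0 ≤ a) (hβ0 : 0 < β) (hβ1 : β ≤ 1)
    (ht : 0 ≤ t) : ∫ r in Ioc 0 t, ((a + r) ^ β - a ^ β) / r ≤ t ^ β / β := by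
  rw [← integral_Ioc_rpow_sub_one hβ0 ht]
  exact setIntegral_mono_on (integrableOn_rpow_add_sub_rpow_div ha hβ0 hβ1 t)
    (integrableOn_Ioc_rpow (by linarith) t) measurableSet_Ioc
    fun r hr => rpow_add_sub_rpow_div_le ha hr.1 hβ0.le hβ1

end Real

open Real

/-- For `β ∈ (0,1)`, `ε ≥ 0`, `t ∈ [0,1]`, the function
`r ↦ ((ε² + r)^β − ε^{2β})/r` is nonnegative and integrable on `(0,t]`, and
`0 ≤ (1/β) ∫₀^t ((ε² + r)^β − ε^{2β})/r dr ≤ t^β/β² ≤ 1/β²`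
(real powers via `Real.rpow`). -/
theorem stmt2 (β ε t : ℝ) (hβ0 : 0 < β) (hβ1 : β < 1) (hε : 0 ≤ ε)
    (ht : t ∈ Set.Icc (0:ℝ) 1) :
    (∀ r ∈ Set.Ioc (0:ℝ) t, 0 ≤ ((ε ^ 2 + r) ^ β - ε ^ (2 * β)) / r) ∧
    MeasureTheory.IntegrableOn
      (fun r : ℝ => ((ε ^ 2 + r) ^ β - ε ^ (2 * β)) / r) (Set.Ioc 0 t) ∧
    0 ≤ (1 / β) * ∫ r in Set.Ioc (0:ℝ) t, ((ε ^ 2 + r) ^ β - ε ^ (2 * β)) / r ∧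
    (1 / β) * (∫ r in Set.Ioc (0:ℝ) t, ((ε ^ 2 + r) ^ β - ε ^ (2 * β)) / r) ≤
      t ^ β / β ^ 2 ∧
    t ^ β / β ^ 2 ≤ 1 / β ^ 2 := by
  have hpow : ε ^ (2 * β) = (ε ^ 2) ^ β := by
    exact_mod_cast rpow_natCast_mul hε 2 β
  simp only [hpow]
  have hnonneg : ∀ r ∈ Ioc (0:ℝ) t, 0 ≤ ((ε ^ 2 + r) ^ β - (ε ^ 2) ^ β) / r :=
    fun r hr => rpow_add_sub_rpow_div_nonneg (sq_nonneg ε) hr.1 hβ0.le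
  have hbound := integral_rpow_add_sub_rpow_div_le (sq_nonneg ε) hβ0 hβ1.le ht.1
  refine ⟨hnonneg, integrableOn_rpow_add_sub_rpow_div (sq_nonneg ε) hβ0 hβ1.le t,
    mul_nonneg (by positivity) (setIntegral_nonneg measurableSet_Ioc hnonneg), ?_, ?_⟩
  · calc (1 / β) * ∫ r in Ioc 0 t, ((ε ^ 2 + r) ^ β - (ε ^ 2) ^ β) / r
        ≤ (1 / β) * (t ^ β / β) := by gcongr
      _ = t ^ β / β ^ 2 := by ring
  · gcongr
    exact rpow_le_one ht.1 ht.2 hβ0.le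
end
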